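/- Let ν_K and ν_R be probability measures on [0,∞) with finite second moments κ₂ = ∫ λ² ν_K(dλ) < ∞ and ρ₂ = ∫ λ² ν_R(dλ) < ∞, with ν_R not concentrated at zero and ν_K not concentrated at zero. Then the system of functional equations h(z) = ∫ λ ν_R(dλ)/(k(z)λ − z), k(z) = ∫ λ ν_K(dλ)/(h(z)λ + 1), z ∈ ℂ∖[0,∞), has at most one solution in the class of pairs (h, k) of functions defined on ℂ∖[0,∞) such that h is analytic on ℂ∖[0,∞), continuous and positive on the open negative semi-axis, Im h(z)·Im z > 0 for Im z ≠ 0, and sup_{ξ≥1} ξ h(−ξ) ∈ (0,∞). -/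

import Mathlib

open MeasureTheory Matrix Filter Topology ENNReal

noncomputable section

/-- The cut plane `ℂ ∖ [0,∞)`. -/
def cutPlane : Set ℂ := {z : ℂ | ¬ (z.im = 0 ∧ 0 ≤ z.re)}

/-- The admissibility class for the function `h`: analytic on `ℂ∖[0,∞)`, continuous and
positive on the open negative semi-axis, `Im h(z)·Im z > 0` off the real axis, and
`sup_{ξ≥1} ξ h(−ξ) ∈ (0,∞)`. -/
def AdmissibleH (h : ℂ → ℂ) : Prop :=
  DifferentiableOn ℂ h cutPlane ∧
  ContinuousOn h {z : ℂ | z.im = 0 ∧ z.re < 0} ∧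
  (∀ x : ℝ, x < 0 → (h (x : ℂ)).im = 0 ∧ 0 < (h (x : ℂ)).re) ∧
  (∀ z : ℂ, z.im ≠ 0 → 0 < (h z).im * z.im) ∧
  (∃ c : ℝ, 0 < c ∧ ∀ ξ : ℝ, 1 ≤ ξ → ξ * (h (-(ξ : ℂ))).re ≤ c)

/-- The pair `(h,k)` solves the system
`h(z) = ∫ λ ν_R(dλ)/(k(z)λ − z)`, `k(z) = ∫ λ ν_K(dλ)/(h(z)λ + 1)` on `ℂ∖[0,∞)`. -/
def SolvesSystem (h k : ℂ → ℂ) (νR νK : Measure ℝ) : Prop :=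
  ∀ z ∈ cutPlane,
    h z = (∫ x : ℝ, (x : ℂ) / (k z * (x : ℂ) - z) ∂νR) ∧
    k z = (∫ x : ℝ, (x : ℂ) / (h z * (x : ℂ) + 1) ∂νK)

lemma integral_complex_ofReal_aux {μ : MeasureTheory.Measure ℝ} {f : ℝ → ℝ} :
    ∫ x, ((f x : ℝ) : ℂ) ∂μ = ((∫ x, f x ∂μ : ℝ) : ℂ) := integral_ofReal

lemma ae_nonneg_of_Iio (ν : Measure ℝ) (h : ν (Set.Iio 0) = 0) : ∀ᵐ x ∂ν, 0 ≤ x := by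
  rw [ae_iff]
  convert h using 2
  ext x; simp [not_le]

lemma solution_real (νK νR : Measure ℝ)
    (hKsupp : νK (Set.Iio 0) = 0)
    (h k : ℂ → ℂ) (ha : AdmissibleH h) (hs : SolvesSystem h k νR νK)
    (ξ : ℝ) (hξ : 0 < ξ) :
    ∃ H K : ℝ, 0 < H ∧ 0 ≤ K ∧ h ((-ξ : ℝ) : ℂ) = (H : ℂ) ∧
      H = ∫ x, x / (K * x + ξ) ∂νR ∧ K = ∫ x, x / (H * x + 1) ∂νK := by
  have aeK : ∀ᵐ x ∂νK, 0 ≤ x := ae_nonneg_of_Iio νK hKsupp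
  set z : ℂ := ((-ξ : ℝ) : ℂ) with hz
  have hzc : z ∈ cutPlane := by
    simp only [cutPlane, Set.mem_setOf_eq, hz, Complex.ofReal_im, Complex.ofReal_re]
    rintro ⟨-, hc⟩; linarith
  obtain ⟨him, hre⟩ := ha.2.2.1 (-ξ) (by linarith)
  set H : ℝ := (h z).re with hH
  have hhz : h z = (H : ℂ) := by
    refine Complex.ext (by simp [hH]) ?_
    simp only [Complex.ofReal_im]
    exact him
  obtain ⟨heqh, heqk⟩ := hs z hzc
  set K : ℝ := ∫ x, x / (H * x + 1) ∂νK with hKdef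
  have hkz : k z = (K : ℂ) := by
    rw [heqk, hhz]
    have hfun : (fun x : ℝ => (x : ℂ) / ((H : ℂ) * (x : ℂ) + 1))
        = fun x : ℝ => ((x / (H * x + 1) : ℝ) : ℂ) := by
      funext x; push_cast; ring
    rw [hfun, integral_complex_ofReal_aux]
  have hKnn : 0 ≤ K := by
    apply integral_nonneg_of_ae
    filter_upwards [aeK] with x hx
    exact div_nonneg hx (by nlinarith)
  refine ⟨H, K, hre, hKnn, hhz, ?_, rfl⟩
  have hfin : h z = ((∫ x, x / (K * x + ξ) ∂νR : ℝ) : ℂ) := by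
    rw [heqh, hkz]
    have hfun : (fun x : ℝ => (x : ℂ) / ((K : ℂ) * (x : ℂ) - z))
        = fun x : ℝ => ((x / (K * x + ξ) : ℝ) : ℂ) := by
      funext x; rw [hz]; push_cast; ring
    rw [hfun, integral_complex_ofReal_aux]
  have := hhz.symm.trans hfin
  exact_mod_cast this

set_option maxHeartbeats 1000000 in
lemma eq_at_neg (νK νR : Measure ℝ) [IsProbabilityMeasure νK] [IsProbabilityMeasure νR]
    (hKsupp : νK (Set.Iio 0) = 0) (hRsupp : νR (Set.Iio 0) = 0)
    (hK2 : Integrable (fun x : ℝ => x ^ 2) νK)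
    (hR2 : Integrable (fun x : ℝ => x ^ 2) νR)
    (h₁ k₁ h₂ k₂ : ℂ → ℂ)
    (ha₁ : AdmissibleH h₁) (hs₁ : SolvesSystem h₁ k₁ νR νK)
    (ha₂ : AdmissibleH h₂) (hs₂ : SolvesSystem h₂ k₂ νR νK)
    (ξ : ℝ) (hξ1 : 1 ≤ ξ)
    (hξ2 : (∫ x, x ^ 2 ∂νK) * (∫ x, x ^ 2 ∂νR) < ξ) :
    h₁ ((-ξ : ℝ) : ℂ) = h₂ ((-ξ : ℝ) : ℂ) := by
  have hξ0 : (0 : ℝ) < ξ := by linarith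
  obtain ⟨H₁, K₁, hH₁, hK₁, hh₁, e₁, f₁⟩ :=
    solution_real νK νR hKsupp h₁ k₁ ha₁ hs₁ ξ hξ0
  obtain ⟨H₂, K₂, hH₂, hK₂, hh₂, e₂, f₂⟩ :=
    solution_real νK νR hKsupp h₂ k₂ ha₂ hs₂ ξ hξ0
  set κ : ℝ := ∫ x, x ^ 2 ∂νK with hκdef
  set ρ : ℝ := ∫ x, x ^ 2 ∂νR with hρdef
  have hκ : 0 ≤ κ := integral_nonneg fun x => sq_nonneg x
  have hρ : 0 ≤ ρ := integral_nonneg fun x => sq_nonneg x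
  have aeK : ∀ᵐ x ∂νK, 0 ≤ x := ae_nonneg_of_Iio νK hKsupp
  have aeR : ∀ᵐ x ∂νR, 0 ≤ x := ae_nonneg_of_Iio νR hRsupp
  have meas : ∀ c d : ℝ, ∀ ν : Measure ℝ,
      AEStronglyMeasurable (fun x : ℝ => x / (c * x + d)) ν := fun c d ν =>
    ((measurable_id.div (((measurable_const.mul measurable_id).add
      measurable_const)))).aestronglyMeasurable
  have intR : ∀ c : ℝ, 0 ≤ c → Integrable (fun x : ℝ => x / (c * x + ξ)) νR := by
    intro c hc
    refine Integrable.mono' ((hR2.add (integrable_const 1)).div_const ξ) (meas c ξ νR) ?_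
    filter_upwards [aeR] with x hx
    have hden : 0 < c * x + ξ := by nlinarith
    simp only [Pi.add_apply]
    rw [Real.norm_eq_abs, abs_of_nonneg (div_nonneg hx hden.le),
      div_le_div_iff₀ hden hξ0]
    nlinarith [sq_nonneg (x - 1), mul_nonneg (mul_nonneg hc hx) (sq_nonneg x),
      mul_nonneg (mul_nonneg hc hx) hξ0.le]
  have intK : ∀ c : ℝ, 0 ≤ c → Integrable (fun x : ℝ => x / (c * x + 1)) νK := by
    intro c hc
    refine Integrable.mono' (hK2.add (integrable_const 1)) (meas c 1 νK) ?_
    filter_upwards [aeK] with x hx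
    have hden : (0 : ℝ) < c * x + 1 := by nlinarith
    simp only [Pi.add_apply]
    rw [Real.norm_eq_abs, abs_of_nonneg (div_nonneg hx hden.le), div_le_iff₀ hden]
    nlinarith [sq_nonneg (x - 1), mul_nonneg (mul_nonneg hc hx) (sq_nonneg x),
      mul_nonneg (mul_nonneg hc hx) hx]
  have key1 : |H₁ - H₂| ≤ |K₁ - K₂| / ξ ^ 2 * ρ := by
    have hi1 := intR K₁ hK₁
    have hi2 := intR K₂ hK₂
    have hint : Integrable (fun x : ℝ => x / (K₁ * x + ξ) - x / (K₂ * x + ξ)) νR :=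
      hi1.sub hi2
    have hintabs : Integrable (fun x : ℝ => |x / (K₁ * x + ξ) - x / (K₂ * x + ξ)|) νR :=
      hint.abs
    calc |H₁ - H₂|
        = |∫ x, (x / (K₁ * x + ξ) - x / (K₂ * x + ξ)) ∂νR| := by
          rw [e₁, e₂, integral_sub hi1 hi2]
      _ ≤ ∫ x, |x / (K₁ * x + ξ) - x / (K₂ * x + ξ)| ∂νR := by
          simpa only [Real.norm_eq_abs] using
            norm_integral_le_integral_norm
              (μ := νR) (fun x : ℝ => x / (K₁ * x + ξ) - x / (K₂ * x + ξ))
      _ ≤ ∫ x, |K₁ - K₂| / ξ ^ 2 * x ^ 2 ∂νR := by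
          refine integral_mono_ae hintabs (hR2.const_mul _) ?_
          filter_upwards [aeR] with x hx
          have hA0 : 0 < K₁ * x + ξ := by nlinarith
          have hB0 : 0 < K₂ * x + ξ := by nlinarith
          have hprod : ξ ^ 2 ≤ (K₁ * x + ξ) * (K₂ * x + ξ) := by
            nlinarith [mul_nonneg (mul_nonneg hK₁ hK₂) (sq_nonneg x),
              mul_nonneg (mul_nonneg hK₁ hx) hξ0.le,
              mul_nonneg (mul_nonneg hK₂ hx) hξ0.le]
          have habs : |x / (K₁ * x + ξ) - x / (K₂ * x + ξ)|
              = x ^ 2 * |K₁ - K₂| / ((K₁ * x + ξ) * (K₂ * x + ξ)) := by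
            rw [div_sub_div _ _ (ne_of_gt hA0) (ne_of_gt hB0), abs_div,
              abs_of_pos (mul_pos hA0 hB0)]
            congr 1
            rw [show x * (K₂ * x + ξ) - (K₁ * x + ξ) * x = x ^ 2 * (K₂ - K₁) by ring,
              abs_mul, abs_of_nonneg (sq_nonneg x), abs_sub_comm]
          rw [habs, div_le_iff₀ (mul_pos hA0 hB0)]
          set c : ℝ := |K₁ - K₂| / ξ ^ 2 with hcdef
          have hc0 : 0 ≤ c := by positivity
          have hcξ : c * ξ ^ 2 = |K₁ - K₂| :=
            div_mul_cancel₀ _ (by positivity : (ξ : ℝ) ^ 2 ≠ 0)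
          have := mul_le_mul_of_nonneg_left hprod (mul_nonneg hc0 (sq_nonneg x))
          nlinarith [this]
      _ = |K₁ - K₂| / ξ ^ 2 * ρ := integral_const_mul _ _
  have key2 : |K₁ - K₂| ≤ |H₁ - H₂| * κ := by
    have hi1 := intK H₁ hH₁.le
    have hi2 := intK H₂ hH₂.le
    have hint : Integrable (fun x : ℝ => x / (H₁ * x + 1) - x / (H₂ * x + 1)) νK :=
      hi1.sub hi2
    have hintabs : Integrable (fun x : ℝ => |x / (H₁ * x + 1) - x / (H₂ * x + 1)|) νK :=
      hint.abs
    calc |K₁ - K₂|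
        = |∫ x, (x / (H₁ * x + 1) - x / (H₂ * x + 1)) ∂νK| := by
          rw [f₁, f₂, integral_sub hi1 hi2]
      _ ≤ ∫ x, |x / (H₁ * x + 1) - x / (H₂ * x + 1)| ∂νK := by
          simpa only [Real.norm_eq_abs] using
            norm_integral_le_integral_norm
              (μ := νK) (fun x : ℝ => x / (H₁ * x + 1) - x / (H₂ * x + 1))
      _ ≤ ∫ x, |H₁ - H₂| * x ^ 2 ∂νK := by
          refine integral_mono_ae hintabs (hK2.const_mul _) ?_
          filter_upwards [aeK] with x hx
          have hA0 : (0 : ℝ) < H₁ * x + 1 := by nlinarith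
          have hB0 : (0 : ℝ) < H₂ * x + 1 := by nlinarith
          have hprod : (1 : ℝ) ≤ (H₁ * x + 1) * (H₂ * x + 1) := by
            nlinarith [mul_nonneg (mul_nonneg hH₁.le hH₂.le) (sq_nonneg x),
              mul_nonneg hH₁.le hx, mul_nonneg hH₂.le hx]
          have habs : |x / (H₁ * x + 1) - x / (H₂ * x + 1)|
              = x ^ 2 * |H₁ - H₂| / ((H₁ * x + 1) * (H₂ * x + 1)) := by
            rw [div_sub_div _ _ (ne_of_gt hA0) (ne_of_gt hB0), abs_div,
              abs_of_pos (mul_pos hA0 hB0)]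
            congr 1
            rw [show x * (H₂ * x + 1) - (H₁ * x + 1) * x = x ^ 2 * (H₂ - H₁) by ring,
              abs_mul, abs_of_nonneg (sq_nonneg x), abs_sub_comm]
          rw [habs, div_le_iff₀ (mul_pos hA0 hB0)]
          have := mul_le_mul_of_nonneg_left hprod
            (mul_nonneg (abs_nonneg (H₁ - H₂)) (sq_nonneg x))
          nlinarith [this]
      _ = |H₁ - H₂| * κ := integral_const_mul _ _
  have hHeq : H₁ = H₂ := by
    have hd : 0 ≤ |H₁ - H₂| := abs_nonneg _
    have hlt : κ * ρ < ξ ^ 2 := by nlinarith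
    have hmul : |H₁ - H₂| * ξ ^ 2 ≤ |K₁ - K₂| * ρ := by
      have h1 := mul_le_mul_of_nonneg_right key1 (by positivity : (0:ℝ) ≤ ξ ^ 2)
      calc |H₁ - H₂| * ξ ^ 2 ≤ |K₁ - K₂| / ξ ^ 2 * ρ * ξ ^ 2 := h1
        _ = |K₁ - K₂| * ρ := by
            rw [div_mul_eq_mul_div, div_mul_cancel₀ _ (by positivity : (ξ:ℝ) ^ 2 ≠ 0)]
    have hmul2 : |K₁ - K₂| * ρ ≤ |H₁ - H₂| * κ * ρ :=
      mul_le_mul_of_nonneg_right key2 hρ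
    have hfin : |H₁ - H₂| * ξ ^ 2 ≤ |H₁ - H₂| * (κ * ρ) := by
      calc |H₁ - H₂| * ξ ^ 2 ≤ |H₁ - H₂| * κ * ρ := le_trans hmul hmul2
        _ = |H₁ - H₂| * (κ * ρ) := by ring
    have habs0 : |H₁ - H₂| = 0 := by
      by_contra hne
      have hpos : 0 < |H₁ - H₂| := lt_of_le_of_ne hd (Ne.symm hne)
      nlinarith [mul_lt_mul_of_pos_left hlt hpos]
    have := abs_eq_zero.mp habs0
    linarith
  rw [hh₁, hh₂, hHeq]

lemma cutPlane_isOpen : IsOpen cutPlane := by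
  have : cutPlane = (Complex.im ⁻¹' {0} ∩ Complex.re ⁻¹' Set.Ici 0)ᶜ := by
    ext z
    simp [cutPlane, Set.mem_setOf_eq]
  rw [this]
  exact ((isClosed_singleton.preimage Complex.continuous_im).inter
    (isClosed_Ici.preimage Complex.continuous_re)).isOpen_compl

lemma cutPlane_segment {z : ℂ} (hz : z ∈ cutPlane) : segment ℝ (-1) z ⊆ cutPlane := by
  rintro w ⟨a, b, ha, hb, hab, rfl⟩
  simp only [cutPlane, Set.mem_setOf_eq] at hz ⊢
  rintro ⟨him, hre⟩
  simp only [Complex.add_im, Complex.add_re, Complex.smul_im, Complex.smul_re,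
    Complex.neg_im, Complex.neg_re, Complex.one_im, Complex.one_re,
    smul_eq_mul] at him hre
  rcases eq_or_ne z.im 0 with h0 | h0
  · have hzre : z.re < 0 := by
      by_contra hc
      exact hz ⟨h0, not_lt.mp hc⟩
    have hkey : 0 < a + b * (-z.re) := by
      rcases eq_or_lt_of_le ha with ha0 | ha0
      · have hb1 : b = 1 := by linarith
        rw [← ha0, hb1]
        simp only [zero_add, one_mul]
        linarith
      · have : 0 ≤ b * (-z.re) := mul_nonneg hb (by linarith)
        linarith
    nlinarith [hkey]
  · have hb0 : b = 0 := by
      have : b * z.im = 0 := by linarith [him]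
      rcases mul_eq_zero.mp this with h | h
      · exact h
      · exact absurd h h0
    have ha1 : a = 1 := by linarith
    rw [hb0, ha1] at hre
    norm_num at hre

lemma cutPlane_isPreconnected : IsPreconnected cutPlane := by
  have hmem : (-1 : ℂ) ∈ cutPlane := by
    simp [cutPlane]
  have : cutPlane = ⋃₀ {s : Set ℂ | ∃ z ∈ cutPlane, s = segment ℝ (-1) z} := by
    ext w
    constructor
    · intro hw
      exact ⟨segment ℝ (-1) w, ⟨w, hw, rfl⟩, right_mem_segment ℝ (-1) w⟩
    · rintro ⟨s, ⟨z, hz, rfl⟩, hws⟩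
      exact cutPlane_segment hz hws
  rw [this]
  apply isPreconnected_sUnion (-1 : ℂ)
  · rintro s ⟨z, hz, rfl⟩
    exact left_mem_segment ℝ (-1) z
  · rintro s ⟨z, hz, rfl⟩
    exact (convex_segment _ _).isPreconnected


set_option maxHeartbeats 1000000 in
/-- **Unique solvability of the functional system.**
With `ν_K, ν_R` probability measures on `[0,∞)` having finite second moments and not
concentrated at zero, the system `h(z) = ∫ λ ν_R(dλ)/(k(z)λ − z)`,
`k(z) = ∫ λ ν_K(dλ)/(h(z)λ + 1)` has at most one solution in the admissible class. -/
theorem system_unique_solution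
    (νK νR : Measure ℝ) [IsProbabilityMeasure νK] [IsProbabilityMeasure νR]
    (hKsupp : νK (Set.Iio 0) = 0) (hRsupp : νR (Set.Iio 0) = 0)
    (hK2 : MeasureTheory.Integrable (fun x : ℝ => x ^ 2) νK)
    (hR2 : MeasureTheory.Integrable (fun x : ℝ => x ^ 2) νR)
    (hK0 : νK {0} < 1) (hR0 : νR {0} < 1)
    (h₁ k₁ h₂ k₂ : ℂ → ℂ)
    (ha₁ : AdmissibleH h₁) (hs₁ : SolvesSystem h₁ k₁ νR νK)
    (ha₂ : AdmissibleH h₂) (hs₂ : SolvesSystem h₂ k₂ νR νK) :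
    ∀ z ∈ cutPlane, h₁ z = h₂ z ∧ k₁ z = k₂ z := by
  set κ : ℝ := ∫ x, x ^ 2 ∂νK with hκdef
  set ρ : ℝ := ∫ x, x ^ 2 ∂νR with hρdef
  have hκ : 0 ≤ κ := integral_nonneg fun x => sq_nonneg x
  have hρ : 0 ≤ ρ := integral_nonneg fun x => sq_nonneg x
  set C : ℝ := 2 + κ * ρ with hCdef
  have hC0 : 0 < C := by nlinarith
  suffices hmain : ∀ w ∈ cutPlane, h₁ w = h₂ w by
    intro z hz
    have hh := hmain z hz
    refine ⟨hh, ?_⟩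
    rw [(hs₁ z hz).2, (hs₂ z hz).2, hh]
  -- identity theorem
  have ha1A : AnalyticOnNhd ℂ h₁ cutPlane := ha₁.1.analyticOnNhd cutPlane_isOpen
  have ha2A : AnalyticOnNhd ℂ h₂ cutPlane := ha₂.1.analyticOnNhd cutPlane_isOpen
  set z₀ : ℂ := ((-C : ℝ) : ℂ) with hz₀def
  have hz₀ : z₀ ∈ cutPlane := by
    simp only [cutPlane, Set.mem_setOf_eq, hz₀def, Complex.ofReal_im, Complex.ofReal_re]
    rintro ⟨-, hc⟩; linarith
  have freq : ∃ᶠ w in 𝓝[≠] z₀, h₁ w = h₂ w := by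
    set u : ℕ → ℂ := fun n => ((-(C + 1 / (n + 1)) : ℝ) : ℂ) with hudef
    have htend : Tendsto u atTop (𝓝[≠] z₀) := by
      rw [tendsto_nhdsWithin_iff]
      constructor
      · have h1 : Tendsto (fun n : ℕ => C + 1 / ((n : ℝ) + 1)) atTop (𝓝 C) := by
          have := tendsto_one_div_add_atTop_nhds_zero_nat (𝕜 := ℝ)
          have h2 := tendsto_const_nhds (x := C) (f := atTop (α := ℕ)) |>.add this
          simpa using h2
        have h3 : Tendsto (fun n : ℕ => (-(C + 1 / ((n : ℝ) + 1)))) atTop (𝓝 (-C)) := h1.neg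
        exact (Complex.continuous_ofReal.tendsto _).comp h3
      · filter_upwards with n
        simp only [Set.mem_compl_iff, Set.mem_singleton_iff, hudef, hz₀def]
        intro hc
        have := Complex.ofReal_injective hc
        have hn : (0 : ℝ) < 1 / ((n : ℝ) + 1) := by positivity
        linarith [neg_injective this]
    refine htend.frequently (p := fun w => h₁ w = h₂ w) (Frequently.of_forall fun n => ?_)
    simp only [hudef]
    have hξ1 : 1 ≤ C + 1 / ((n : ℝ) + 1) := by
      have hn : (0 : ℝ) ≤ 1 / ((n : ℝ) + 1) := by positivity
      nlinarith
    have hξ2 : κ * ρ < C + 1 / ((n : ℝ) + 1) := by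
      have hn : (0 : ℝ) < 1 / ((n : ℝ) + 1) := by positivity
      nlinarith
    exact eq_at_neg νK νR hKsupp hRsupp hK2 hR2 h₁ k₁ h₂ k₂ ha₁ hs₁ ha₂ hs₂
      (C + 1 / ((n : ℝ) + 1)) hξ1 hξ2
  exact fun w hw =>
    ha1A.eqOn_of_preconnected_of_frequently_eq ha2A cutPlane_isPreconnected hz₀ freq hw
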